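/- arXiv:1309.4109 — 3 statements merged into one kernel-verified Lean document; each statement's English description precedes it below -/
import Mathlib

section
/- Let C ⊆ ℤ² be a simple closed curve. Then every point of C has at least 2 and at most 4 4-adjacent points in C ∪ IN_C; equivalently, CP_1 = ∅ and CP_i = ∅ for every i > 4, so that C is the disjoint union of CP_2, CP_3 and CP_4. -/
/-- Points of the digital plane ℤ². -/
abbrev Pt := ℤ × ℤ

/-- 4-adjacency: the two points differ by 1 in exactly one coordinate
(ℓ¹-distance 1). -/
def Adj4 (p q : Pt) : Prop := |p.1 - q.1| + |p.2 - q.2| = 1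

/-- A set `A` is 4-connected: any two of its points are joined by a path inside `A`
whose consecutive points are 4-adjacent. -/
def Conn4 (A : Set Pt) : Prop :=
  ∀ p ∈ A, ∀ q ∈ A,
    Relation.ReflTransGen (fun x y => x ∈ A ∧ y ∈ A ∧ Adj4 x y) p q

/-- `comp` is a 4-connected component of `A`: a maximal 4-connected subset. -/
def IsComp4 (A comp : Set Pt) : Prop :=
  comp.Nonempty ∧ comp ⊆ A ∧ Conn4 comp ∧
    ∀ T, comp ⊆ T → T ⊆ A → Conn4 T → T = comp

/-- A simple closed curve: a finite set of at least 4 points admitting a cyclic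
ordering of its distinct points in which consecutive points are 4-adjacent. -/
def IsSimpleClosedCurve (C : Set Pt) : Prop :=
  ∃ n : ℕ, 4 ≤ n ∧ ∃ p : ZMod n → Pt,
    Function.Injective p ∧ Set.range p = C ∧ ∀ i : ZMod n, Adj4 (p i) (p (i + 1))

/-- `IN_C`: the union of the bounded 4-connected components of ℤ² ∖ C. -/
def INC (C : Set Pt) : Set Pt :=
  ⋃₀ {comp | IsComp4 Cᶜ comp ∧ Bornology.IsBounded comp}

/-- `CP C i`: the set of points of `C` having exactly `i` 4-adjacent points
in `C ∪ IN_C`. -/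
def CP (C : Set Pt) (i : ℕ) : Set Pt :=
  {p ∈ C | {q | q ∈ C ∪ INC C ∧ Adj4 p q}.ncard = i}

lemma Adj4.symm' {p q : Pt} (h : Adj4 p q) : Adj4 q p := by
  unfold Adj4 at *; rw [abs_sub_comm q.1, abs_sub_comm q.2]; exact h

def Nbhd (p : Pt) : Set Pt :=
  {(p.1+1,p.2), (p.1-1,p.2), (p.1,p.2+1), (p.1,p.2-1)}

lemma adj_mem_nbhd {p q : Pt} (h : Adj4 p q) : q ∈ Nbhd p := by
  unfold Adj4 at h
  rcases abs_cases (p.1 - q.1) with ⟨h1, _⟩ | ⟨h1, _⟩ <;>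
  rcases abs_cases (p.2 - q.2) with ⟨h2, _⟩ | ⟨h2, _⟩ <;>
  · simp only [Nbhd, Set.mem_insert_iff, Set.mem_singleton_iff, Prod.ext_iff]
    omega

lemma nbhd_finite (p : Pt) : (Nbhd p).Finite := by
  unfold Nbhd; exact Set.toFinite _

lemma nbhd_ncard (p : Pt) : (Nbhd p).ncard ≤ 4 := by
  unfold Nbhd
  apply le_trans (Set.ncard_insert_le _ _)
  have := Set.ncard_insert_le ((p.1-1,p.2) : Pt) ({(p.1,p.2+1), (p.1,p.2-1)} : Set Pt)
  have := Set.ncard_insert_le ((p.1,p.2+1) : Pt) ({(p.1,p.2-1)} : Set Pt)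
  simp [Set.ncard_singleton] at *
  omega

lemma key_bounds {C : Set Pt} (hC : IsSimpleClosedCurve C) {x : Pt} (hx : x ∈ C) :
    2 ≤ {q | q ∈ C ∪ INC C ∧ Adj4 x q}.ncard ∧
    {q | q ∈ C ∪ INC C ∧ Adj4 x q}.ncard ≤ 4 := by
  set S : Set Pt := {q | q ∈ C ∪ INC C ∧ Adj4 x q} with hS
  have hsub : S ⊆ Nbhd x := fun q hq => adj_mem_nbhd hq.2
  have hfin : S.Finite := (nbhd_finite x).subset hsub
  constructor
  · obtain ⟨n, hn, p, hinj, hrange, hadj⟩ := hC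
    obtain ⟨i, rfl⟩ : ∃ i, p i = x := by
      rw [← hrange] at hx; exact hx
    have hne : (i - 1 : ZMod n) ≠ i + 1 := by
      intro h
      have h2 : ((2 : ℕ) : ZMod n) = 0 := by
        push_cast
        linear_combination -h
      have : NeZero n := ⟨by omega⟩
      rw [ZMod.natCast_eq_zero_iff] at h2
      have := Nat.le_of_dvd (by norm_num) h2
      omega
    have hane : p (i - 1) ≠ p (i + 1) := fun h => hne (hinj h)
    have hmem : ∀ j : ZMod n, p j ∈ C := by
      intro j; rw [← hrange]; exact ⟨j, rfl⟩
    have hA : p (i - 1) ∈ S := by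
      refine ⟨Or.inl (hmem _), ?_⟩
      have := hadj (i - 1)
      rw [sub_add_cancel] at this
      exact this.symm'
    have hB : p (i + 1) ∈ S := ⟨Or.inl (hmem _), hadj i⟩
    have : ({p (i - 1), p (i + 1)} : Set Pt) ⊆ S := by
      intro q hq; rcases hq with rfl | rfl
      · exact hA
      · exact hB
    calc 2 = ({p (i - 1), p (i + 1)} : Set Pt).ncard := (Set.ncard_pair hane).symm
      _ ≤ S.ncard := Set.ncard_le_ncard this hfin
  · exact le_trans (Set.ncard_le_ncard hsub (nbhd_finite x)) (nbhd_ncard x)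

/-- For a simple closed curve `C`, every point of `C` has at least 2 and at most 4
4-adjacent points in `C ∪ IN_C`; equivalently `CP_1 = ∅` and `CP_i = ∅` for all
`i > 4`, so that `C` is the disjoint union of `CP_2`, `CP_3` and `CP_4`. -/
theorem scc_corner_point_classification (C : Set Pt)
    (hC : IsSimpleClosedCurve C) :
    (∀ p ∈ C, 2 ≤ {q | q ∈ C ∪ INC C ∧ Adj4 p q}.ncard ∧
              {q | q ∈ C ∪ INC C ∧ Adj4 p q}.ncard ≤ 4) ∧
    CP C 1 = ∅ ∧ (∀ i : ℕ, 4 < i → CP C i = ∅) ∧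
    C = CP C 2 ∪ CP C 3 ∪ CP C 4 ∧
    ({CP C 2, CP C 3, CP C 4} : Set (Set Pt)).PairwiseDisjoint id := by
  have key : ∀ x ∈ C, 2 ≤ {q | q ∈ C ∪ INC C ∧ Adj4 x q}.ncard ∧
      {q | q ∈ C ∪ INC C ∧ Adj4 x q}.ncard ≤ 4 := fun x hx => key_bounds hC hx
  have hdisj : ∀ i j : ℕ, i ≠ j → Disjoint (CP C i) (CP C j) := by
    intro i j hij
    rw [Set.disjoint_left]
    rintro x ⟨_, hxi⟩ ⟨_, hxj⟩
    exact hij (hxi ▸ hxj ▸ rfl)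
  refine ⟨key, ?_, ?_, ?_, ?_⟩
  · ext x
    simp only [CP, Set.mem_setOf_eq, Set.mem_empty_iff_false, iff_false, not_and]
    intro hx h1
    have := (key x hx).1
    omega
  · intro i hi
    ext x
    simp only [CP, Set.mem_setOf_eq, Set.mem_empty_iff_false, iff_false, not_and]
    intro hx h1
    have := (key x hx).2
    omega
  · ext x
    constructor
    · intro hx
      obtain ⟨h2, h4⟩ := key x hx
      have : {q | q ∈ C ∪ INC C ∧ Adj4 x q}.ncard = 2 ∨
          {q | q ∈ C ∪ INC C ∧ Adj4 x q}.ncard = 3 ∨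
          {q | q ∈ C ∪ INC C ∧ Adj4 x q}.ncard = 4 := by omega
      rcases this with h | h | h
      · exact Or.inl (Or.inl ⟨hx, h⟩)
      · exact Or.inl (Or.inr ⟨hx, h⟩)
      · exact Or.inr ⟨hx, h⟩
    · rintro ((⟨h, _⟩ | ⟨h, _⟩) | ⟨h, _⟩) <;> exact h
  · intro a ha b hb hab
    simp only [Set.mem_insert_iff, Set.mem_singleton_iff] at ha hb
    rcases ha with rfl | rfl | rfl <;> rcases hb with rfl | rfl | rfl <;>
      first
        | exact absurd rfl hab
        | exact hdisj _ _ (by norm_num)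
end

section
/- Let S ⊆ ℤ² be a set with no pathological configuration. Then any two 8-adjacent points of S are either 4-adjacent or have a common 4-adjacent point lying in S; consequently, the 4-connected components of S coincide with the 8-connected components of S. -/
/-- 8-adjacency: the two points are distinct and differ by at most 1 in each
coordinate. -/
def Adj8 (p q : Pt) : Prop := p ≠ q ∧ |p.1 - q.1| ≤ 1 ∧ |p.2 - q.2| ≤ 1

/-- A set `A` is 8-connected: any two of its points are joined by a path inside `A`
whose consecutive points are 8-adjacent. -/
def Conn8 (A : Set Pt) : Prop :=
  ∀ p ∈ A, ∀ q ∈ A,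
    Relation.ReflTransGen (fun x y => x ∈ A ∧ y ∈ A ∧ Adj8 x y) p q

/-- `comp` is an 8-connected component of `A`: a maximal 8-connected subset. -/
def IsComp8 (A comp : Set Pt) : Prop :=
  comp.Nonempty ∧ comp ⊆ A ∧ Conn8 comp ∧
    ∀ T, comp ⊆ T → T ⊆ A → Conn8 T → T = comp

/-- `A` contains a pathological configuration: a unit 2×2 block of ℤ² meeting `A`
in exactly two diagonally opposite points. -/
def Patho (A : Set Pt) : Prop :=
  ∃ x y : ℤ,
    (((x, y) ∈ A ∧ (x + 1, y + 1) ∈ A ∧ (x + 1, y) ∉ A ∧ (x, y + 1) ∉ A) ∨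
     ((x + 1, y) ∈ A ∧ (x, y + 1) ∈ A ∧ (x, y) ∉ A ∧ (x + 1, y + 1) ∉ A))

/-!
If `p`, `q` are diagonal neighbours, the other two corners of the 2×2 block they span are
`(p.1, q.2)` and `(q.1, p.2)`, both 4-adjacent to `p` and to `q`; excluding pathological
configurations puts one of them in `S`. So every 8-step inside `S` is replaced by at most two
4-steps inside `S`, and the two reachability relations on `S` agree. For a symmetric adjacency the
components of `S` are exactly its reachability classes, hence the components agree too.
-/

namespace Relation

variable {α : Type*} (r : α → α → Prop)

def restrictTo (A : Set α) (x y : α) : Prop := x ∈ A ∧ y ∈ A ∧ r x y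

def ChainConnected (A : Set α) : Prop :=
  ∀ p ∈ A, ∀ q ∈ A, ReflTransGen (restrictTo r A) p q

def IsChainComponent (S C : Set α) : Prop :=
  C.Nonempty ∧ C ⊆ S ∧ ChainConnected r C ∧
    ∀ T, C ⊆ T → T ⊆ S → ChainConnected r T → T = C

def reachSet (S : Set α) (a : α) : Set α := {x | ReflTransGen (restrictTo r S) a x}

variable {r} {S A B C : Set α} {a x y : α}

instance [Std.Symm r] : Std.Symm (restrictTo r A) where
  symm _ _ := fun ⟨hx, hy, h⟩ => ⟨hy, hx, Std.Symm.symm _ _ h⟩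

theorem ReflTransGen.restrictTo_mono (hAB : A ⊆ B)
    (h : ReflTransGen (restrictTo r A) x y) : ReflTransGen (restrictTo r B) x y :=
  ReflTransGen.mono (fun _ _ ⟨hx, hy, hxy⟩ => ⟨hAB hx, hAB hy, hxy⟩) _ _ h

theorem reachSet_subset (ha : a ∈ S) : reachSet r S a ⊆ S := by
  intro x hx
  induction hx with
  | refl => exact ha
  | tail _ step _ => exact step.2.1

theorem mem_reachSet_of_mem (ha : a ∈ A) (hA : ChainConnected r A) (hAS : A ⊆ S) (hx : x ∈ A) :
    x ∈ reachSet r S a :=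
  (hA a ha x hx).restrictTo_mono hAS

theorem ReflTransGen.restrictTo_reachSet (h : ReflTransGen (restrictTo r S) a x) :
    ReflTransGen (restrictTo r (reachSet r S a)) a x := by
  induction h with
  | refl => rfl
  | tail hay step ih => exact ih.tail ⟨hay, hay.tail step, step.2.2⟩

theorem chainConnected_reachSet [Std.Symm r] : ChainConnected r (reachSet r S a) :=
  fun _ hp _ hq => (Std.Symm.symm _ _ hp.restrictTo_reachSet).trans hq.restrictTo_reachSet

theorem isChainComponent_reachSet [Std.Symm r] (ha : a ∈ S) :
    IsChainComponent r S (reachSet r S a) :=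
  ⟨⟨a, .refl⟩, reachSet_subset ha, chainConnected_reachSet, fun _ hsub hTS hT =>
    Set.Subset.antisymm (fun _ hx => mem_reachSet_of_mem (hsub .refl) hT hTS hx) hsub⟩

theorem IsChainComponent.eq_reachSet [Std.Symm r] (hC : IsChainComponent r S C) (ha : a ∈ C) :
    C = reachSet r S a := by
  obtain ⟨-, hCS, hCconn, hCmax⟩ := hC
  exact (hCmax _ (fun _ hx => mem_reachSet_of_mem ha hCconn hCS hx)
    (reachSet_subset (hCS ha)) chainConnected_reachSet).symm

theorem isChainComponent_iff [Std.Symm r] :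
    IsChainComponent r S C ↔ ∃ a ∈ S, C = reachSet r S a := by
  constructor
  · intro hC
    obtain ⟨a, ha⟩ := hC.1
    exact ⟨a, hC.2.1 ha, hC.eq_reachSet ha⟩
  · rintro ⟨a, ha, rfl⟩
    exact isChainComponent_reachSet ha

theorem setOf_isChainComponent_eq {r' : α → α → Prop} [Std.Symm r] [Std.Symm r']
    (h : ∀ x ∈ S, ∀ y ∈ S, r x y → ReflTransGen (restrictTo r' S) x y)
    (h' : ∀ x ∈ S, ∀ y ∈ S, r' x y → ReflTransGen (restrictTo r S) x y) :
    {C | IsChainComponent r S C} = {C | IsChainComponent r' S C} := by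
  have hreach : ∀ a, reachSet r S a = reachSet r' S a := fun a => Set.ext fun x =>
    ⟨ReflTransGen.lift' id (fun _ _ ⟨hx, hy, hxy⟩ => h _ hx _ hy hxy) _ _,
     ReflTransGen.lift' id (fun _ _ ⟨hx, hy, hxy⟩ => h' _ hx _ hy hxy) _ _⟩
  ext C
  simp only [isChainComponent_iff, hreach]

end Relation

open Relation

instance : Std.Symm Adj4 where
  symm p q h := by unfold Adj4 at *; rwa [abs_sub_comm q.1, abs_sub_comm q.2]

instance : Std.Symm Adj8 where
  symm p q := fun ⟨hne, h1, h2⟩ => ⟨hne.symm, by rwa [abs_sub_comm], by rwa [abs_sub_comm]⟩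

theorem Adj4.adj8 {p q : Pt} (h : Adj4 p q) : Adj8 p q := by
  unfold Adj4 at h
  refine ⟨?_, by grind, by grind⟩
  rintro rfl
  simp at h

/-- `(a, d)` and `(c, b)` are the other two corners of the 2×2 block with diagonal
`(a, b)`, `(c, d)`. -/
theorem mem_or_mem_of_not_patho {S : Set Pt} (hS : ¬ Patho S) {a b c d : ℤ}
    (hp : (a, b) ∈ S) (hq : (c, d) ∈ S) (hac : |a - c| = 1) (hbd : |b - d| = 1) :
    (a, d) ∈ S ∨ (c, b) ∈ S := by
  by_contra! h
  rcases (abs_eq zero_le_one).1 hac with hac | hac <;>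
    rcases (abs_eq zero_le_one).1 hbd with hbd | hbd
  · obtain rfl : a = c + 1 := by omega
    obtain rfl : b = d + 1 := by omega
    exact hS ⟨c, d, Or.inl ⟨hq, hp, h.1, h.2⟩⟩
  · obtain rfl : a = c + 1 := by omega
    obtain rfl : d = b + 1 := by omega
    exact hS ⟨c, b, Or.inr ⟨hp, hq, h.2, h.1⟩⟩
  · obtain rfl : c = a + 1 := by omega
    obtain rfl : b = d + 1 := by omega
    exact hS ⟨a, d, Or.inr ⟨hq, hp, h.1, h.2⟩⟩
  · obtain rfl : c = a + 1 := by omega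
    obtain rfl : d = b + 1 := by omega
    exact hS ⟨a, b, Or.inl ⟨hp, hq, h.2, h.1⟩⟩

theorem adj4_or_exists_adj4_adj4_of_adj8 {S : Set Pt} (hS : ¬ Patho S) {p q : Pt}
    (hp : p ∈ S) (hq : q ∈ S) (hpq : Adj8 p q) :
    Adj4 p q ∨ ∃ r ∈ S, Adj4 p r ∧ Adj4 r q := by
  obtain ⟨hne, h1, h2⟩ := hpq
  by_cases hdiag : |p.1 - q.1| = 1 ∧ |p.2 - q.2| = 1
  · right
    rcases mem_or_mem_of_not_patho hS hp hq hdiag.1 hdiag.2 with h | h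
    · exact ⟨_, h, by simp [Adj4, hdiag.2], by simp [Adj4, hdiag.1]⟩
    · exact ⟨_, h, by simp [Adj4, hdiag.1], by simp [Adj4, hdiag.2]⟩
  · left
    have : p.1 ≠ q.1 ∨ p.2 ≠ q.2 := by
      by_contra!; exact hne (Prod.ext this.1 this.2)
    unfold Adj4
    grind

/-- For a set `S` with no pathological configuration, any two 8-adjacent points of
`S` are either 4-adjacent or have a common 4-adjacent point in `S`; consequently
the 4-connected components of `S` coincide with its 8-connected components. -/
theorem no_patho_four_components_eq_eight_components (S : Set Pt)
    (hpath : ¬ Patho S) :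
    (∀ p ∈ S, ∀ q ∈ S, Adj8 p q →
      Adj4 p q ∨ ∃ r ∈ S, Adj4 p r ∧ Adj4 r q) ∧
    {comp | IsComp4 S comp} = {comp | IsComp8 S comp} := by
  have hcommon : ∀ p ∈ S, ∀ q ∈ S, Adj8 p q → Adj4 p q ∨ ∃ r ∈ S, Adj4 p r ∧ Adj4 r q :=
    fun _ hp _ hq => adj4_or_exists_adj4_adj4_of_adj8 hpath hp hq
  -- `IsComp4` and `IsComp8` unfold to `IsChainComponent Adj4` and `IsChainComponent Adj8`.
  refine ⟨hcommon, setOf_isChainComponent_eq (r := Adj4) ?_ ?_⟩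
  · exact fun x hx y hy hxy => .single ⟨hx, hy, hxy.adj8⟩
  · intro x hx y hy hxy
    rcases hcommon x hx y hy hxy with h | ⟨z, hz, hxz, hzy⟩
    · exact .single ⟨hx, hy, h⟩
    · exact .tail (.single ⟨hx, hz, hxz⟩) ⟨hz, hy, hzy⟩
end

section
/- Let F be a closed cubical surface and define the discrete Gaussian curvature of a vertex p ∈ V by K(p) = 2π − d(p)·(π/2). Then the discrete Gauss–Bonnet formula holds: Σ_{p ∈ V} K(p) = 2π·χ(F); in particular, if g is an integer with χ(F) = 2 − 2g, then Σ_{p ∈ V} K(p) = 2π·(2 − 2g). -/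
/-- An axis-parallel unit square in ℝ³ with vertices in ℤ³, recorded by its
minimal corner and the two (ordered) coordinate directions it spans. -/
structure USquare where
  corner : Fin 3 → ℤ
  d1 : Fin 3
  d2 : Fin 3
  hlt : d1 < d2

/-- The `i`-th standard basis vector of ℤ³. -/
def e (i : Fin 3) : Fin 3 → ℤ := fun j => if j = i then 1 else 0

/-- The four vertices of a unit square. -/
def vertices (s : USquare) : Finset (Fin 3 → ℤ) :=
  {s.corner, s.corner + e s.d1, s.corner + e s.d2, s.corner + e s.d1 + e s.d2}

/-- The four edges of a unit square; a unit edge is recorded as a pair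
(its minimal endpoint, its direction). -/
def sqEdges (s : USquare) : Finset ((Fin 3 → ℤ) × Fin 3) :=
  {(s.corner, s.d1), (s.corner, s.d2),
   (s.corner + e s.d1, s.d2), (s.corner + e s.d2, s.d1)}

/-- A closed cubical surface: a nonempty finite set of axis-parallel unit squares
such that every edge of every square of `F` is an edge of exactly two squares
of `F`. -/
def IsClosedSurface (F : Finset USquare) : Prop :=
  F.Nonempty ∧ ∀ s ∈ F, ∀ ed ∈ sqEdges s,
    (F.filter (fun t => ed ∈ sqEdges t)).card = 2

/-- `V F`: the set of all vertices of squares of `F`. -/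
def V (F : Finset USquare) : Finset (Fin 3 → ℤ) := F.biUnion vertices

/-- `E F`: the set of all edges of squares of `F`. -/
def E (F : Finset USquare) : Finset ((Fin 3 → ℤ) × Fin 3) := F.biUnion sqEdges

/-- `deg F p`: the number of squares of `F` containing the point `p`. -/
def deg (F : Finset USquare) (p : Fin 3 → ℤ) : ℕ :=
  (F.filter (fun s => p ∈ vertices s)).card

/-- `M F i`: the set of vertices contained in exactly `i` squares of `F`. -/
def M (F : Finset USquare) (i : ℕ) : Finset (Fin 3 → ℤ) :=
  (V F).filter (fun p => deg F p = i)

/-- The Euler characteristic `χ(F) = |V| − |E| + |F|`. -/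
def chi (F : Finset USquare) : ℤ := (V F).card - (E F).card + F.card

lemma e_ne_zero (i : Fin 3) : e i ≠ 0 := by
  intro h
  have := congrFun h i
  simp [e] at this

lemma add_e_ne (c : Fin 3 → ℤ) (i : Fin 3) : c + e i ≠ c := by
  intro h
  have := congrFun h i
  simp [e] at this

lemma add_e_ne' (c : Fin 3 → ℤ) {i j : Fin 3} (hij : i ≠ j) :
    c + e i ≠ c + e j := by
  intro h
  have := congrFun h i
  simp [e, hij, Ne.symm hij] at this

lemma card_vertices (s : USquare) : (vertices s).card = 4 := by
  have h12 : s.d1 ≠ s.d2 := ne_of_lt s.hlt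
  have h1 := add_e_ne s.corner s.d1
  have h2 := add_e_ne s.corner s.d2
  have h3 := add_e_ne' s.corner h12
  have h4 : s.corner ≠ s.corner + e s.d1 + e s.d2 := by
    intro h
    have := congrFun h s.d1
    simp [e, h12, Ne.symm h12] at this
  have h5 : s.corner + e s.d1 ≠ s.corner + e s.d1 + e s.d2 :=
    (add_e_ne (s.corner + e s.d1) s.d2).symm
  have h6 : s.corner + e s.d2 ≠ s.corner + e s.d1 + e s.d2 := by
    intro h
    have := congrFun h s.d1
    simp [e, h12, Ne.symm h12] at this
  simp only [vertices]
  rw [Finset.card_insert_of_notMem (by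
      simp only [Finset.mem_insert, Finset.mem_singleton]
      rintro (h | h | h)
      exacts [h1 h.symm, h2 h.symm, h4 h]),
    Finset.card_insert_of_notMem (by
      simp only [Finset.mem_insert, Finset.mem_singleton]
      rintro (h | h)
      exacts [h3 h, h5 h]),
    Finset.card_insert_of_notMem (by simp only [Finset.mem_singleton]; exact h6)]
  simp

lemma card_sqEdges (s : USquare) : (sqEdges s).card = 4 := by
  have h12 : s.d1 ≠ s.d2 := ne_of_lt s.hlt
  have h1 := add_e_ne s.corner s.d1
  have h2 := add_e_ne s.corner s.d2
  have h3 := add_e_ne' s.corner h12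
  simp only [sqEdges]
  rw [Finset.card_insert_of_notMem (by
      simp [Prod.ext_iff, h12, h1.symm, h2.symm]),
    Finset.card_insert_of_notMem (by
      simp [Prod.ext_iff, h12, h1.symm, h2.symm]),
    Finset.card_insert_of_notMem (by
      simp [Prod.ext_iff, h12, Ne.symm h12, h3])]
  simp

lemma sum_deg (F : Finset USquare) : ∑ p ∈ V F, deg F p = 4 * F.card := by
  have : ∑ p ∈ V F, deg F p = ∑ s ∈ F, ((V F).filter (· ∈ vertices s)).card := by
    simp only [deg, Finset.card_filter]
    exact Finset.sum_comm
  rw [this]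
  have hsub : ∀ s ∈ F, vertices s ⊆ V F := fun s hs =>
    Finset.subset_biUnion_of_mem vertices hs
  rw [Finset.sum_congr rfl fun s hs => by
    rw [Finset.filter_mem_eq_inter, Finset.inter_eq_right.mpr (hsub s hs),
      card_vertices]]
  simp [mul_comm]

lemma card_E (F : Finset USquare) (hF : IsClosedSurface F) :
    2 * (E F).card = 4 * F.card := by
  have key : ∑ ed ∈ E F, (F.filter (fun t => ed ∈ sqEdges t)).card
      = ∑ s ∈ F, ((E F).filter (· ∈ sqEdges s)).card := by
    simp only [Finset.card_filter]
    exact Finset.sum_comm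
  have hsub : ∀ s ∈ F, sqEdges s ⊆ E F := fun s hs =>
    Finset.subset_biUnion_of_mem sqEdges hs
  have h2 : ∀ ed ∈ E F, (F.filter (fun t => ed ∈ sqEdges t)).card = 2 := by
    intro ed hed
    obtain ⟨s, hs, hed'⟩ := Finset.mem_biUnion.mp hed
    exact hF.2 s hs ed hed'
  calc 2 * (E F).card = ∑ ed ∈ E F, (F.filter (fun t => ed ∈ sqEdges t)).card := by
        rw [Finset.sum_congr rfl h2]; simp [mul_comm]
    _ = ∑ s ∈ F, ((E F).filter (· ∈ sqEdges s)).card := key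
    _ = 4 * F.card := by
        rw [Finset.sum_congr rfl fun s hs => by
          rw [Finset.filter_mem_eq_inter, Finset.inter_eq_right.mpr (hsub s hs),
            card_sqEdges]]
        simp [mul_comm]

/-- Discrete Gauss–Bonnet for a closed cubical surface with
`K(p) = 2π − d(p)·(π/2)`: `Σ_{p ∈ V} K(p) = 2π·χ(F)`; in particular, if `g` is
an integer with `χ(F) = 2 − 2g`, then `Σ_{p ∈ V} K(p) = 2π·(2 − 2g)`. -/
theorem discrete_gauss_bonnet (F : Finset USquare)
    (hF : IsClosedSurface F)
    (K : (Fin 3 → ℤ) → ℝ)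
    (hK : ∀ p ∈ V F, K p = 2 * Real.pi - (deg F p : ℝ) * (Real.pi / 2)) :
    (∑ p ∈ V F, K p = 2 * Real.pi * (chi F : ℝ)) ∧
    (∀ g : ℤ, chi F = 2 - 2 * g →
      ∑ p ∈ V F, K p = 2 * Real.pi * ((2 : ℝ) - 2 * (g : ℝ))) := by
  have hdeg := sum_deg F
  have hE := card_E F hF
  have hmain : ∑ p ∈ V F, K p = 2 * Real.pi * (chi F : ℝ) := by
    rw [Finset.sum_congr rfl hK, Finset.sum_sub_distrib, Finset.sum_const, nsmul_eq_mul]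
    have hsum : ∑ p ∈ V F, (deg F p : ℝ) * (Real.pi / 2)
        = (4 * F.card : ℕ) * (Real.pi / 2) := by
      rw [← Finset.sum_mul, ← Nat.cast_sum, hdeg]
    rw [hsum]
    have hEeq : ((E F).card : ℝ) = 2 * F.card := by
      have : (2 * (E F).card : ℕ) = (4 * F.card : ℕ) := hE
      have := congrArg (fun n : ℕ => (n : ℝ)) this
      push_cast at this ⊢
      linarith
    simp only [chi]
    push_cast
    rw [hEeq]
    ring
  refine ⟨hmain, fun g hg => ?_⟩
  rw [hmain, hg]
  push_cast
  ring
end
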